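/- Define H_ρ : ℝ × ℝ → ℝ for ρ > 0 by H_ρ(v,λ) = vλ + (ρ/2)v² if ρv + λ ≥ 0 and H_ρ(v,λ) = −λ²/(2ρ) otherwise. Then for each fixed λ ∈ ℝ, the function v ↦ H_ρ(v,λ) is convex on ℝ, and for each fixed v ∈ ℝ, the function λ ↦ H_ρ(v,λ) is concave on ℝ. -/
import Mathlib


noncomputable def Hrho (ρ v lam : ℝ) : ℝ :=
  if 0 ≤ ρ * v + lam then v * lam + ρ / 2 * v ^ 2 else -(lam ^ 2) / (2 * ρ)

lemma Hrho_eq1 (ρ : ℝ) (hρ : 0 < ρ) (v lam : ℝ) :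
    Hrho ρ v lam = (max 0 (ρ * v + lam)) ^ 2 / (2 * ρ) - lam ^ 2 / (2 * ρ) := by
  unfold Hrho
  split
  · next h =>
    rw [max_eq_right h]
    field_simp
    ring
  · next h =>
    rw [max_eq_left (le_of_lt (not_le.mp h))]
    ring

lemma Hrho_eq2 (ρ : ℝ) (hρ : 0 < ρ) (v lam : ℝ) :
    Hrho ρ v lam = -((max 0 (-(ρ * v + lam))) ^ 2) / (2 * ρ) + v * lam + ρ / 2 * v ^ 2 := by
  unfold Hrho
  split
  · next h =>
    rw [max_eq_left (by linarith)]
    ring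
  · next h =>
    rw [max_eq_right (by linarith [not_le.mp h])]
    field_simp
    ring

theorem stmt2 (ρ : ℝ) (hρ : 0 < ρ) :
    (∀ lam : ℝ, ConvexOn ℝ Set.univ (fun v => Hrho ρ v lam)) ∧
      (∀ v : ℝ, ConcaveOn ℝ Set.univ (fun lam => Hrho ρ v lam)) := by
  constructor
  · intro lam
    refine ⟨convex_univ, ?_⟩
    intro x _ y _ a b ha hb hab
    obtain rfl : b = 1 - a := by linarith
    simp only [Hrho_eq1 ρ hρ, smul_eq_mul]
    set Mx := max 0 (ρ * x + lam) with hMx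
    set My := max 0 (ρ * y + lam) with hMy
    set Mc := max 0 (ρ * (a * x + (1 - a) * y) + lam) with hMc
    have h1 : 0 ≤ Mx := le_max_left _ _
    have h2 : 0 ≤ My := le_max_left _ _
    have h3 : 0 ≤ Mc := le_max_left _ _
    have h4 : ρ * x + lam ≤ Mx := le_max_right _ _
    have h5 : ρ * y + lam ≤ My := le_max_right _ _
    have h6 : Mc ≤ a * Mx + (1 - a) * My := by
      apply max_le
      · have := mul_nonneg ha h1
        have := mul_nonneg hb h2
        linarith
      · nlinarith [mul_le_mul_of_nonneg_left h4 ha, mul_le_mul_of_nonneg_left h5 hb]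
    have h7 : Mc ^ 2 ≤ a * Mx ^ 2 + (1 - a) * My ^ 2 := by
      nlinarith [sq_nonneg (Mx - My), mul_nonneg ha hb]
    have h8 : Mc ^ 2 / (2 * ρ) ≤ (a * Mx ^ 2 + (1 - a) * My ^ 2) / (2 * ρ) := by
      apply div_le_div_of_nonneg_right h7 (by linarith)
    have h9 : (a * Mx ^ 2 + (1 - a) * My ^ 2) / (2 * ρ) - lam ^ 2 / (2 * ρ) =
        a * (Mx ^ 2 / (2 * ρ) - lam ^ 2 / (2 * ρ)) +
          (1 - a) * (My ^ 2 / (2 * ρ) - lam ^ 2 / (2 * ρ)) := by ring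
    linarith [h8]
  · intro v
    refine ⟨convex_univ, ?_⟩
    intro x _ y _ a b ha hb hab
    obtain rfl : b = 1 - a := by linarith
    simp only [Hrho_eq2 ρ hρ, smul_eq_mul]
    set Nx := max 0 (-(ρ * v + x)) with hNx
    set Ny := max 0 (-(ρ * v + y)) with hNy
    set Nc := max 0 (-(ρ * v + (a * x + (1 - a) * y))) with hNc
    have h1 : 0 ≤ Nx := le_max_left _ _
    have h2 : 0 ≤ Ny := le_max_left _ _
    have h3 : 0 ≤ Nc := le_max_left _ _
    have h4 : -(ρ * v + x) ≤ Nx := le_max_right _ _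
    have h5 : -(ρ * v + y) ≤ Ny := le_max_right _ _
    have h6 : Nc ≤ a * Nx + (1 - a) * Ny := by
      apply max_le
      · have := mul_nonneg ha h1
        have := mul_nonneg hb h2
        linarith
      · nlinarith [mul_le_mul_of_nonneg_left h4 ha, mul_le_mul_of_nonneg_left h5 hb]
    have h7 : Nc ^ 2 ≤ a * Nx ^ 2 + (1 - a) * Ny ^ 2 := by
      nlinarith [sq_nonneg (Nx - Ny), mul_nonneg ha hb]
    have h8 : Nc ^ 2 / (2 * ρ) ≤ (a * Nx ^ 2 + (1 - a) * Ny ^ 2) / (2 * ρ) := by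
      apply div_le_div_of_nonneg_right h7 (by linarith)
    have h9 : a * (-Nx ^ 2 / (2 * ρ) + v * x + ρ / 2 * v ^ 2) +
        (1 - a) * (-Ny ^ 2 / (2 * ρ) + v * y + ρ / 2 * v ^ 2) =
        -((a * Nx ^ 2 + (1 - a) * Ny ^ 2) / (2 * ρ)) + v * (a * x + (1 - a) * y) +
          ρ / 2 * v ^ 2 := by ring
    rw [h9]
    have h10 : -(Nc ^ 2) / (2 * ρ) = -(Nc ^ 2 / (2 * ρ)) := by ring
    linarith [h8, h10.le, h10.ge]
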